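/- (Monotonicity of saturation) For a site x and finite sets K₁ ⊂ K₂ with x ∈ K₁, the saturation events are nested: S(x, K₁) ⊂ S(x, K₂). That is, if the weak stabilisation of (x, K₁) ends with exactly w_x active particles at x, then so does the weak stabilisation of (x, K₂). -/
import Mathlib


/-- A particle configuration: `a x` active particles, `i x` inactive particles at site `x`. -/
structure Config (V : Type*) where
  a : V → ℕ
  i : V → ℕ

namespace ARW

variable {V : Type*} [DecidableEq V]

/-- The state-space constraint: no site holds both active and inactive particles. -/
def InOmega (η : Config V) : Prop := ∀ x, η.a x = 0 ∨ η.i x = 0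

/-- The sleep operator `τ^{x,s}` with capacities `w`. -/
def sleepOp (w : V → ℕ) (x : V) (η : Config V) : Config V where
  a z := if z = x then (if η.a x ≤ w x then 0 else η.a x) else η.a z
  i z := if z = x then (if η.a x ≤ w x then η.a x else 0) else η.i z

/-- The jump operator `τ^{x,y}` with capacities `w`. -/
def jumpOp (w : V → ℕ) (x y : V) (η : Config V) : Config V where
  a z := if z = x then η.a x - 1
    else if z = y then
      (if η.i y = 0 then η.a y + 1 else if η.i y + 1 ≤ w y then 0 else η.i y + 1)
    else η.a z
  i z := if z = x then 0
    else if z = y then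
      (if η.i y = 0 then 0 else if η.i y + 1 ≤ w y then η.i y + 1 else 0)
    else η.i z

end ARW

namespace ARW

variable {V : Type*} [DecidableEq V]

/-- A stack of instructions: at each site `x` and index `j`, either a sleep
instruction (`none`) or a jump instruction towards `some y`. -/
abbrev Stack (V : Type*) := V → ℕ → Option V

/-- A stack is valid for the graph `G` if jump instructions point to neighbours. -/
def ValidStack (G : SimpleGraph V) (τ : Stack V) : Prop :=
  ∀ x j y, τ x j = some y → G.Adj x y

/-- Apply a single instruction at site `x`. -/
def applyInstr (w : V → ℕ) (x : V) : Option V → Config V → Config V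
  | none => sleepOp w x
  | some y => jumpOp w x y

/-- Topple site `x`: use the next unused instruction of its stack and
increase the toppling counter. -/
def topple (w : V → ℕ) (τ : Stack V) (x : V) (s : Config V × (V → ℕ)) :
    Config V × (V → ℕ) :=
  (applyInstr w x (τ x (s.2 x)) s.1, Function.update s.2 x (s.2 x + 1))

/-- Apply a sequence of topplings (`Φ_α`). -/
def toppleSeq (w : V → ℕ) (τ : Stack V) : List V → Config V × (V → ℕ) → Config V × (V → ℕ)
  | [], s => s
  | x :: l, s => toppleSeq w τ l (topple w τ x s)

/-- A toppling sequence is legal if each toppled site is unstable at the moment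
it is toppled. -/
def Legal (w : V → ℕ) (τ : Stack V) : List V → Config V × (V → ℕ) → Prop
  | [], _ => True
  | x :: l, s => 0 < s.1.a x ∧ Legal w τ l (topple w τ x s)

/-- A configuration is stable in `K` if it has no unstable site of `K`. -/
def StableIn (K : Finset V) (η : Config V) : Prop := ∀ x ∈ K, η.a x = 0

end ARW

namespace ARW

variable {V : Type*} [DecidableEq V]

/-- A sequence of topplings is legal for the weak stabilisation of `(x, K)` if
each toppled site is an unstable site of `K \ {x}`, or is `x` itself holding at
least `w x + 1` active particles. -/
def WeakLegal (w : V → ℕ) (τ : Stack V) (x : V) (K : Finset V) :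
    List V → Config V × (V → ℕ) → Prop
  | [], _ => True
  | z :: l, s =>
      ((z ∈ K ∧ z ≠ x ∧ 0 < s.1.a z) ∨ (z = x ∧ w x + 1 ≤ s.1.a x)) ∧
        WeakLegal w τ x K l (topple w τ z s)

/-- A configuration is weakly stable for `(x, K)`. -/
def WeaklyStable (w : V → ℕ) (x : V) (K : Finset V) (η : Config V) : Prop :=
  η.a x ≤ w x ∧ ∀ y ∈ K, y ≠ x → η.a y = 0

end ARW

namespace ARW
variable {V : Type*} [DecidableEq V]

lemma Config.ext' {η η' : Config V} (ha : η.a = η'.a) (hi : η.i = η'.i) : η = η' := by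
  cases η; cases η'; simp_all

/-- Update a single site `p` via a function of its (active, inactive) contents. -/
def upd (p : V) (f : ℕ → ℕ → ℕ × ℕ) (η : Config V) : Config V where
  a t := if t = p then (f (η.a p) (η.i p)).1 else η.a t
  i t := if t = p then (f (η.a p) (η.i p)).2 else η.i t

/-- Departure of one active particle. -/
def depF : ℕ → ℕ → ℕ × ℕ := fun a _ => (a - 1, 0)
/-- The sleep action. -/
def slpF (wp : ℕ) : ℕ → ℕ → ℕ × ℕ := fun a _ => if a ≤ wp then (0, a) else (a, 0)
/-- Receiving one particle. -/
def rcvF (wp : ℕ) : ℕ → ℕ → ℕ × ℕ := fun a i =>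
  if i = 0 then (a + 1, 0) else if i + 1 ≤ wp then (0, i + 1) else (i + 1, 0)

lemma upd_a_ne {p q : V} (h : q ≠ p) (f : ℕ → ℕ → ℕ × ℕ) (η : Config V) :
    (upd p f η).a q = η.a q := by simp [upd, h]

lemma upd_i_ne {p q : V} (h : q ≠ p) (f : ℕ → ℕ → ℕ × ℕ) (η : Config V) :
    (upd p f η).i q = η.i q := by simp [upd, h]

lemma upd_comm {p q : V} (h : p ≠ q) (f g : ℕ → ℕ → ℕ × ℕ) (η : Config V) :
    upd p f (upd q g η) = upd q g (upd p f η) := by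
  refine Config.ext' ?_ ?_ <;> funext t <;>
    simp only [upd, if_neg h, if_neg (Ne.symm h)] <;>
    split_ifs <;> simp_all

lemma upd_same (p : V) (f g : ℕ → ℕ → ℕ × ℕ) (η : Config V) :
    upd p f (upd p g η) = upd p (fun a i => f (g a i).1 (g a i).2) η := by
  refine Config.ext' ?_ ?_ <;> funext t <;>
    simp only [upd, if_pos rfl] <;> split_ifs <;> simp_all

lemma upd_congr {p : V} {f g : ℕ → ℕ → ℕ × ℕ} {η : Config V}
    (h : f (η.a p) (η.i p) = g (η.a p) (η.i p)) : upd p f η = upd p g η := by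
  refine Config.ext' ?_ ?_ <;> funext t <;> simp only [upd] <;>
    split_ifs <;> simp_all

lemma upd_swap_same {p : V} {f g : ℕ → ℕ → ℕ × ℕ} {η : Config V}
    (h : ∀ a i, 0 < a → i = 0 →
      f (g a i).1 (g a i).2 = g (f a i).1 (f a i).2)
    (ha : 0 < η.a p) (hi : η.i p = 0) :
    upd p f (upd p g η) = upd p g (upd p f η) := by
  rw [upd_same, upd_same]; exact upd_congr (h _ _ ha hi)

lemma sleepOp_eq (w : V → ℕ) (z : V) (η : Config V) :
    sleepOp w z η = upd z (slpF (w z)) η := by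
  refine Config.ext' ?_ ?_ <;> funext t <;>
    simp only [sleepOp, upd, slpF] <;> split_ifs <;> simp_all

lemma jumpOp_eq_ne (w : V → ℕ) {z u : V} (huz : u ≠ z) (η : Config V) :
    jumpOp w z u η = upd u (rcvF (w u)) (upd z depF η) := by
  refine Config.ext' ?_ ?_ <;> funext t <;>
    simp only [jumpOp, upd, rcvF, depF] <;> split_ifs <;> simp_all

lemma jumpOp_eq_self (w : V → ℕ) (z : V) (η : Config V) :
    jumpOp w z z η = upd z depF η := by
  refine Config.ext' ?_ ?_ <;> funext t <;>
    simp only [jumpOp, upd, depF] <;> split_ifs <;> simp_all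

/-- receive and depart commute at a site holding active particles. -/
lemma rcv_dep (wp : ℕ) : ∀ a i, 0 < a → i = 0 →
    rcvF wp (depF a i).1 (depF a i).2 = depF (rcvF wp a i).1 (rcvF wp a i).2 := by
  intro a i ha hi; subst hi
  simp only [rcvF, depF]; split_ifs <;> simp_all [Prod.ext_iff] <;> omega

/-- receive and sleep commute at a site holding active particles. -/
lemma rcv_slp (wp : ℕ) : ∀ a i, 0 < a → i = 0 →
    rcvF wp (slpF wp a i).1 (slpF wp a i).2 = slpF wp (rcvF wp a i).1 (rcvF wp a i).2 := by
  intro a i ha hi; subst hi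
  simp only [rcvF, slpF]; split_ifs <;> simp_all [Prod.ext_iff] <;> omega

lemma sleep_jump_comm (w : V → ℕ) {z y : V} (v : V) {η : Config V}
    (hΩ : InOmega η) (hzy : z ≠ y) (hz : 0 < η.a z) (hy : 0 < η.a y) :
    jumpOp w y v (sleepOp w z η) = sleepOp w z (jumpOp w y v η) := by
  have hiz : η.i z = 0 := (hΩ z).resolve_left (by omega)
  rcases eq_or_ne y v with rfl | hyv
  · rw [jumpOp_eq_self, jumpOp_eq_self, sleepOp_eq, sleepOp_eq,
      upd_comm (Ne.symm hzy)]
  · rw [jumpOp_eq_ne w (Ne.symm hyv), jumpOp_eq_ne w (Ne.symm hyv), sleepOp_eq, sleepOp_eq,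
      upd_comm (Ne.symm hzy) depF (slpF (w z))]
    rcases eq_or_ne z v with rfl | hzv
    · exact upd_swap_same (rcv_slp _)
        (by rw [upd_a_ne hzy]; exact hz) (by rw [upd_i_ne hzy]; exact hiz)
    · exact upd_comm (Ne.symm hzv) _ _ _

lemma jump_jump_comm (w : V → ℕ) {z y : V} (u v : V) {η : Config V}
    (hΩ : InOmega η) (hzy : z ≠ y) (hz : 0 < η.a z) (hy : 0 < η.a y) :
    jumpOp w y v (jumpOp w z u η) = jumpOp w z u (jumpOp w y v η) := by
  have hiz : η.i z = 0 := (hΩ z).resolve_left (by omega)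
  have hiy : η.i y = 0 := (hΩ y).resolve_left (by omega)
  rcases eq_or_ne z u with rfl | hzu <;> rcases eq_or_ne y v with rfl | hyv
  · rw [jumpOp_eq_self, jumpOp_eq_self, jumpOp_eq_self, jumpOp_eq_self,
      upd_comm (Ne.symm hzy)]
  · -- u = z, v ≠ y
    rw [jumpOp_eq_self, jumpOp_eq_self, jumpOp_eq_ne w (Ne.symm hyv),
      jumpOp_eq_ne w (Ne.symm hyv), upd_comm (Ne.symm hzy) depF depF]
    rcases eq_or_ne z v with rfl | hzv
    · exact upd_swap_same (rcv_dep _)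
        (by rw [upd_a_ne hzy]; exact hz) (by rw [upd_i_ne hzy]; exact hiz)
    · exact upd_comm (Ne.symm hzv) _ _ _
  · -- u ≠ z, v = y
    rw [jumpOp_eq_self, jumpOp_eq_self, jumpOp_eq_ne w (Ne.symm hzu),
      jumpOp_eq_ne w (Ne.symm hzu), upd_comm hzy depF depF]
    rcases eq_or_ne y u with rfl | hyu
    · exact (upd_swap_same (rcv_dep _)
        (by rw [upd_a_ne (Ne.symm hzy)]; exact hy)
        (by rw [upd_i_ne (Ne.symm hzy)]; exact hiy)).symm
    · exact (upd_comm (Ne.symm hyu) _ _ _).symm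
  · -- u ≠ z, v ≠ y
    rw [jumpOp_eq_ne w (Ne.symm hzu), jumpOp_eq_ne w (Ne.symm hzu),
      jumpOp_eq_ne w (Ne.symm hyv), jumpOp_eq_ne w (Ne.symm hyv)]
    have hstep1 : upd y depF (upd u (rcvF (w u)) (upd z depF η)) =
        upd u (rcvF (w u)) (upd y depF (upd z depF η)) := by
      rcases eq_or_ne y u with rfl | hyu
      · exact (upd_swap_same (rcv_dep _)
          (by rw [upd_a_ne (Ne.symm hzy)]; exact hy)
          (by rw [upd_i_ne (Ne.symm hzy)]; exact hiy)).symm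
      · exact upd_comm hyu _ _ _
    have hstep2 : upd z depF (upd v (rcvF (w v)) (upd y depF η)) =
        upd v (rcvF (w v)) (upd z depF (upd y depF η)) := by
      rcases eq_or_ne z v with rfl | hzv
      · exact (upd_swap_same (rcv_dep _)
          (by rw [upd_a_ne hzy]; exact hz)
          (by rw [upd_i_ne hzy]; exact hiz)).symm
      · exact upd_comm hzv _ _ _
    rw [hstep1, hstep2, upd_comm hzy depF depF]
    rcases eq_or_ne u v with rfl | huv
    · rfl
    · exact upd_comm (Ne.symm huv) _ _ _

lemma applyInstr_comm (w : V → ℕ) {z y : V} (o₁ o₂ : Option V) {η : Config V}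
    (hΩ : InOmega η) (hzy : z ≠ y) (hz : 0 < η.a z) (hy : 0 < η.a y) :
    applyInstr w y o₂ (applyInstr w z o₁ η) = applyInstr w z o₁ (applyInstr w y o₂ η) := by
  cases o₁ with
  | none =>
    cases o₂ with
    | none =>
      show sleepOp w y (sleepOp w z η) = sleepOp w z (sleepOp w y η)
      rw [sleepOp_eq, sleepOp_eq, sleepOp_eq, sleepOp_eq, upd_comm (Ne.symm hzy)]
    | some v => exact sleep_jump_comm w v hΩ hzy hz hy
  | some u =>
    cases o₂ with
    | none => exact (sleep_jump_comm w u hΩ hzy.symm hy hz).symm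
    | some v => exact jump_jump_comm w u v hΩ hzy hz hy

end ARW

namespace ARW
variable {V : Type*} [DecidableEq V]

lemma inOmega_applyInstr (w : V → ℕ) (z : V) (o : Option V) {η : Config V}
    (h : InOmega η) : InOmega (applyInstr w z o η) := by
  cases o with
  | none =>
    intro t
    simp only [applyInstr, sleepOp]
    rcases h t with h' | h' <;> split_ifs <;> simp_all
  | some v =>
    intro t
    simp only [applyInstr, jumpOp]
    rcases h t with h' | h' <;> split_ifs <;> simp_all

lemma a_mono (w : V → ℕ) (y : V) (o : Option V) {η : Config V} (hΩ : InOmega η)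
    {z : V} (hzy : z ≠ y) (hz : 0 < η.a z) : η.a z ≤ (applyInstr w y o η).a z := by
  have hiz : η.i z = 0 := (hΩ z).resolve_left (by omega)
  cases o with
  | none => simp [applyInstr, sleepOp, hzy]
  | some v =>
    simp only [applyInstr, jumpOp, if_neg hzy]
    split_ifs with h1 h2 <;> simp_all

/-- State-level commutation. -/
lemma topple_comm (w : V → ℕ) (τ : Stack V) {z y : V} (hzy : z ≠ y)
    {s : Config V × (V → ℕ)} (hΩ : InOmega s.1) (hz : 0 < s.1.a z) (hy : 0 < s.1.a y) :
    topple w τ y (topple w τ z s) = topple w τ z (topple w τ y s) := by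
  unfold topple
  simp only [Function.update_of_ne hzy, Function.update_of_ne (Ne.symm hzy)]
  refine Prod.ext ?_ ?_
  · exact applyInstr_comm w _ _ hΩ hzy hz hy
  · simp [Function.update_comm hzy]

lemma inOmega_topple (w : V → ℕ) (τ : Stack V) (z : V) {s : Config V × (V → ℕ)}
    (h : InOmega s.1) : InOmega (topple w τ z s).1 :=
  inOmega_applyInstr w z _ h

lemma inOmega_toppleSeq (w : V → ℕ) (τ : Stack V) :
    ∀ (l : List V) (s : Config V × (V → ℕ)), InOmega s.1 → InOmega (toppleSeq w τ l s).1
  | [], _, h => h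
  | z :: l, s, h => inOmega_toppleSeq w τ l _ (inOmega_topple w τ z h)

/-- The weak-legality condition for toppling `z`. -/
abbrev WC (w : V → ℕ) (x : V) (K : Finset V) (z : V) (η : Config V) : Prop :=
  (z ∈ K ∧ z ≠ x ∧ 0 < η.a z) ∨ (z = x ∧ w x + 1 ≤ η.a x)

lemma WC.pos {w : V → ℕ} {x : V} {K : Finset V} {z : V} {η : Config V}
    (h : WC w x K z η) : 0 < η.a z := by
  rcases h with ⟨_, _, h⟩ | ⟨rfl, h⟩ <;> omega

lemma WC.preserved {w : V → ℕ} {x : V} {K : Finset V} {z y : V} {η : Config V}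
    (h : WC w x K z η) (hΩ : InOmega η) (hzy : z ≠ y) (o : Option V) :
    WC w x K z (applyInstr w y o η) := by
  have := a_mono w y o hΩ hzy h.pos
  rcases h with ⟨h1, h2, h3⟩ | ⟨rfl, h2⟩
  · exact Or.inl ⟨h1, h2, by omega⟩
  · exact Or.inr ⟨rfl, by omega⟩

lemma weakLegal_cons {w : V → ℕ} {τ : Stack V} {x : V} {K : Finset V} {z : V}
    {l : List V} {s : Config V × (V → ℕ)} :
    WeakLegal w τ x K (z :: l) s ↔ WC w x K z s.1 ∧ WeakLegal w τ x K l (topple w τ z s) :=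
  Iff.rfl

/-- Pull a legally-toppleable site `z` to the front of a weakly stabilising sequence. -/
lemma pull_front (w : V → ℕ) (τ : Stack V) (x : V) (K : Finset V) :
    ∀ (β : List V) (s : Config V × (V → ℕ)), InOmega s.1 →
      WeakLegal w τ x K β s → WeaklyStable w x K (toppleSeq w τ β s).1 →
      ∀ z, WC w x K z s.1 →
      ∃ β', β.length = β'.length + 1 ∧ WC w x K z s.1 ∧
        WeakLegal w τ x K β' (topple w τ z s) ∧
        toppleSeq w τ β s = toppleSeq w τ β' (topple w τ z s)
  | [], s, hΩ, _, hst, z, hz => by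
      exfalso
      rcases hz with ⟨h1, h2, h3⟩ | ⟨rfl, h2⟩
      · have := hst.2 z h1 h2; simp [toppleSeq] at this; omega
      · have := hst.1; simp [toppleSeq] at this; omega
  | y :: β, s, hΩ, hleg, hst, z, hz => by
      rcases eq_or_ne y z with rfl | hyz
      · exact ⟨β, rfl, hz, hleg.2, rfl⟩
      · obtain ⟨hy, hleg'⟩ := hleg
        have hΩ' : InOmega (topple w τ y s).1 := inOmega_topple w τ y hΩ
        have hz' : WC w x K z (topple w τ y s).1 :=
          WC.preserved hz hΩ (Ne.symm hyz) _
        have hst' : WeaklyStable w x K (toppleSeq w τ β (topple w τ y s)).1 := hst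
        obtain ⟨β', hlen, _, hleg'', heq⟩ :=
          pull_front w τ x K β (topple w τ y s) hΩ' hleg' hst' z hz'
        have hcomm : topple w τ z (topple w τ y s) = topple w τ y (topple w τ z s) :=
          topple_comm w τ hyz hΩ (WC.pos hy) (WC.pos hz)
        refine ⟨y :: β', by simp [hlen], hz, ?_, ?_⟩
        · refine ⟨WC.preserved hy hΩ hyz _, ?_⟩
          rw [← hcomm]; exact hleg''
        · show toppleSeq w τ β (topple w τ y s) = _
          rw [heq]
          show _ = toppleSeq w τ β' (topple w τ y (topple w τ z s))
          rw [← hcomm]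

/-- Any weakly legal `α` can be extended to reach the endpoint of a weakly
stabilising `β`. -/
lemma extend_to (w : V → ℕ) (τ : Stack V) (x : V) (K : Finset V) :
    ∀ (α β : List V) (s : Config V × (V → ℕ)), InOmega s.1 →
      WeakLegal w τ x K α s → WeakLegal w τ x K β s →
      WeaklyStable w x K (toppleSeq w τ β s).1 →
      ∃ γ, WeakLegal w τ x K γ (toppleSeq w τ α s) ∧
        toppleSeq w τ β s = toppleSeq w τ γ (toppleSeq w τ α s)
  | [], β, s, _, _, hβ, _ => ⟨β, hβ, rfl⟩
  | z :: α, β, s, hΩ, hα, hβ, hst => by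
      obtain ⟨β', _, _, hβ', heq⟩ := pull_front w τ x K β s hΩ hβ hst z hα.1
      have hΩ' : InOmega (topple w τ z s).1 := inOmega_topple w τ z hΩ
      obtain ⟨γ, hγleg, hγ⟩ := extend_to w τ x K α β' (topple w τ z s) hΩ' hα.2 hβ'
        (by rw [← heq]; exact hst)
      exact ⟨γ, hγleg, by rw [heq]; exact hγ⟩

/-- Along a weakly legal sequence, once `x` holds at least `w x ≥ 1` active
particles, it keeps at least `w x`. -/
lemma aLB (w : V → ℕ) (τ : Stack V) (x : V) (K : Finset V) (hw : 1 ≤ w x) :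
    ∀ (γ : List V) (s : Config V × (V → ℕ)), InOmega s.1 →
      WeakLegal w τ x K γ s → w x ≤ s.1.a x → w x ≤ (toppleSeq w τ γ s).1.a x
  | [], _, _, _, h => h
  | z :: γ, s, hΩ, hleg, h => by
      refine aLB w τ x K hw γ (topple w τ z s) (inOmega_topple w τ z hΩ) hleg.2 ?_
      rcases hleg.1 with ⟨_, hzx, hz⟩ | ⟨heq, hx⟩
      · have := a_mono w z (τ z (s.2 z)) hΩ (Ne.symm hzx) (by omega)
        show w x ≤ (applyInstr w z _ s.1).a x; omega
      · rw [heq]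
        show w x ≤ (applyInstr w x (τ x (s.2 x)) s.1).a x
        cases hτz : τ x (s.2 x) with
        | none => simp only [applyInstr, sleepOp, if_pos rfl]; split_ifs <;> omega
        | some v => simp only [applyInstr, jumpOp, if_pos rfl]; split_ifs <;> omega

/-- Weak legality is monotone in `K`. -/
lemma weakLegal_mono (w : V → ℕ) (τ : Stack V) (x : V) {K₁ K₂ : Finset V}
    (hK : K₁ ⊆ K₂) : ∀ (α : List V) (s : Config V × (V → ℕ)),
      WeakLegal w τ x K₁ α s → WeakLegal w τ x K₂ α s
  | [], _, _ => trivial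
  | z :: α, s, h => by
      refine ⟨?_, weakLegal_mono w τ x hK α _ h.2⟩
      rcases h.1 with ⟨h1, h2, h3⟩ | h
      · exact Or.inl ⟨hK h1, h2, h3⟩
      · exact Or.inr h

end ARW

open ARW in
/-- Monotonicity of saturation: if the weak stabilisation of `(x, K₁)` ends with
exactly `w x` active particles at `x`, then so does the weak stabilisation of
`(x, K₂)`, for `x ∈ K₁ ⊆ K₂`. -/
theorem saturation_monotone {V : Type*} [DecidableEq V] (G : SimpleGraph V)
    (w : V → ℕ) (τ : Stack V) (hτ : ValidStack G τ)
    (η : Config V) (hΩ : InOmega η)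
    (x : V) (K₁ K₂ : Finset V) (hx : x ∈ K₁) (hK : K₁ ⊆ K₂) (α β : List V)
    (hα : WeakLegal w τ x K₁ α (η, fun _ => 0))
    (hβ : WeakLegal w τ x K₂ β (η, fun _ => 0))
    (hαs : WeaklyStable w x K₁ (toppleSeq w τ α (η, fun _ => 0)).1)
    (hβs : WeaklyStable w x K₂ (toppleSeq w τ β (η, fun _ => 0)).1)
    (hsat : (toppleSeq w τ α (η, fun _ => 0)).1.a x = w x) :
    (toppleSeq w τ β (η, fun _ => 0)).1.a x = w x := by
  rcases Nat.eq_zero_or_pos (w x) with hw | hw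
  · have := hβs.1; omega
  · set s : Config V × (V → ℕ) := (η, fun _ => 0) with hs
    have hΩs : InOmega s.1 := hΩ
    have hα₂ : WeakLegal w τ x K₂ α s := weakLegal_mono w τ x hK α s hα
    obtain ⟨γ, hγleg, hγeq⟩ := extend_to w τ x K₂ α β s hΩs hα₂ hβ hβs
    have hΩα : InOmega (toppleSeq w τ α s).1 := inOmega_toppleSeq w τ α s hΩs
    have hlb : w x ≤ (toppleSeq w τ γ (toppleSeq w τ α s)).1.a x :=
      aLB w τ x K₂ hw γ (toppleSeq w τ α s) hΩα hγleg (le_of_eq hsat.symm)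
    rw [hγeq]
    have := hβs.1
    rw [hγeq] at this
    omega
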